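/- arXiv:1105.2160 — 2 statements merged into one kernel-verified Lean document; each statement's English description precedes it below -/
import Mathlib

section
/- Let λ ∈ ℂ with |λ| ≠ 1. Then for every matrix A ∈ ℂ^{n×n} there exists S ∈ ℂ^{n×n} such that A + S·J_n(λ) + S* = 0; in other words, the real-linear map S ↦ S·J_n(λ) + S* from ℂ^{n×n} to ℂ^{n×n} is surjective. -/
open Matrix

/-- The `n×n` upper-triangular Jordan block with eigenvalue `l`. -/
noncomputable def Jmat (n : ℕ) (l : ℂ) : Matrix (Fin n) (Fin n) ℂ :=
  Matrix.of fun i j =>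
    if (i : ℕ) = (j : ℕ) then l
    else if (j : ℕ) = (i : ℕ) + 1 then 1 else 0

/-- The symmetric matrix `Δ_n`: (1-based) entry `(j,k)` is `1` if `j+k = n+1`,
`i` if `j+k = n+2`, and `0` otherwise. -/
noncomputable def Dmat (n : ℕ) : Matrix (Fin n) (Fin n) ℂ :=
  Matrix.of fun i j =>
    if (i : ℕ) + (j : ℕ) + 1 = n then 1
    else if (i : ℕ) + (j : ℕ) = n then Complex.I
    else 0

/-- The `2m×2m` block matrix `H_m(l) = [[0, I],[J_m(l), 0]]`. -/
noncomputable def Hmat (m : ℕ) (l : ℂ) : Matrix (Fin m ⊕ Fin m) (Fin m ⊕ Fin m) ℂ :=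
  Matrix.fromBlocks 0 1 (Jmat m l) 0

/-- `T(A) = {CᴴA + AC}`, the tangent space to the *congruence class of `A`. -/
def Tset {n : Type*} [Fintype n] (A : Matrix n n ℂ) : Set (Matrix n n ℂ) :=
  {X | ∃ C : Matrix n n ℂ, X = Cᴴ * A + A * C}

/-- `T(M,N) = {(SᴴM + NR, RᴴN + MS)}`. -/
def Tpair {p q : Type*} [Fintype p] [Fintype q]
    (M : Matrix p p ℂ) (N : Matrix q q ℂ) :
    Set (Matrix q p ℂ × Matrix p q ℂ) :=
  {X | ∃ (S : Matrix p q ℂ) (R : Matrix q p ℂ),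
      X = (Sᴴ * M + N * R, Rᴴ * N + M * S)}

/-! The map `S ↦ S J + Sᴴ` is `ℝ`-linear on a finite-dimensional space, so it is enough that its
kernel is trivial. If `S J + Sᴴ = 0` then `S = Jᴴ S J`. Writing `J = λ + N` with `N` nilpotent,
`S ↦ Jᴴ S J - S` is `|λ|² - 1` plus a nilpotent operator commuting with it (built from left
multiplication by `Nᴴ` and right multiplication by `N`), hence invertible when `|λ| ≠ 1`. -/

theorem Commute.isUnit_smul_one_add_mul_smul_one_add_sub_one {K R : Type*} [Field K] [Ring R]
    [Algebra K R] {a b : R} (hab : Commute a b) (ha : IsNilpotent a) (hb : IsNilpotent b)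
    {α β : K} (hαβ : α * β ≠ 1) :
    IsUnit ((α • 1 + a) * (β • 1 + b) - 1) := by
  have hexpand : (α • 1 + a) * (β • 1 + b) - 1 = (α * β - 1) • 1 + (α • b + β • a + a * b) := by
    simp only [add_mul, mul_add, smul_mul_assoc, mul_smul_comm, one_mul, mul_one, smul_add,
      smul_smul, sub_smul, one_smul, mul_comm β α]
    abel
  have hnil : IsNilpotent (α • b + β • a + a * b) := by
    refine Commute.isNilpotent_add ?_ (Commute.isNilpotent_add ?_ (hb.smul α) (ha.smul β))
      (hab.isNilpotent_mul_right ha)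
    · exact ((hab.symm.mul_right (Commute.refl b)).smul_left α).add_left
        (((Commute.refl a).mul_right hab).smul_left β)
    · exact (hab.symm.smul_left α).smul_right β
  have hunit : IsUnit ((α * β - 1) • (1 : R)) := by
    rw [← Algebra.algebraMap_eq_smul_one]
    exact (sub_ne_zero.2 hαβ).isUnit.map _
  rw [hexpand]
  exact hnil.isUnit_add_left_of_commute hunit ((Commute.one_right _).smul_right _)

theorem IsNilpotent.star {R : Type*} [Semiring R] [StarRing R] {x : R} (hx : IsNilpotent x) :
    IsNilpotent (star x) := by
  obtain ⟨k, hk⟩ := hx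
  exact ⟨k, by rw [← star_pow, hk, star_zero]⟩

section MulAddConjTranspose

variable {m : Type*} [Fintype m]

def mulAddConjTranspose (B : Matrix m m ℂ) : Matrix m m ℂ →ₗ[ℝ] Matrix m m ℂ where
  toFun S := S * B + Sᴴ
  map_add' S T := by
    simp only [add_mul, conjTranspose_add]
    abel
  map_smul' r S := by
    simp only [smul_mul, conjTranspose_smul, star_trivial, smul_add, RingHom.id_apply]

theorem conjTranspose_mul_mul_eq_self_of_mul_add_conjTranspose_eq_zero {B S : Matrix m m ℂ}
    (h : S * B + Sᴴ = 0) : Bᴴ * S * B = S := by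
  have hS' : Sᴴ = -(S * B) := eq_neg_of_add_eq_zero_right h
  calc Bᴴ * S * B = -(Bᴴ * -(S * B)) := by rw [mul_neg, neg_neg, Matrix.mul_assoc]
    _ = -(Bᴴ * Sᴴ) := by rw [hS']
    _ = (-(S * B))ᴴ := by rw [conjTranspose_neg, conjTranspose_mul]
    _ = S := by rw [← hS', conjTranspose_conjTranspose]

theorem surjective_mulAddConjTranspose {B : Matrix m m ℂ}
    (hB : ∀ S : Matrix m m ℂ, Bᴴ * S * B = S → S = 0) :
    Function.Surjective (mulAddConjTranspose B) := by
  refine LinearMap.injective_iff_surjective.1 ((injective_iff_map_eq_zero _).2 fun S hS => ?_)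
  exact hB S (conjTranspose_mul_mul_eq_self_of_mul_add_conjTranspose_eq_zero hS)

end MulAddConjTranspose

theorem Jmat_eq_smul_one_add (n : ℕ) (l : ℂ) : Jmat n l = l • 1 + Jmat n 0 := by
  ext i j
  by_cases h : (i : ℕ) = j
  · simp [Jmat, Fin.ext h]
  · simp [Jmat, h, Fin.ext_iff]

theorem isUpperTriangular_Jmat (n : ℕ) (l : ℂ) : (Jmat n l).IsUpperTriangular := by
  intro i j hji
  have hji : (j : ℕ) < i := hji
  simp only [Jmat, of_apply]
  rw [if_neg (by omega), if_neg (by omega)]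

theorem isNilpotent_Jmat_zero (n : ℕ) : IsNilpotent (Jmat n 0) := by
  refine ⟨n, ?_⟩
  have hdiag : ∀ i, Jmat n 0 i i = 0 := fun i => by simp [Jmat]
  simpa [charpoly_of_isUpperTriangular _ (isUpperTriangular_Jmat n 0), hdiag]
    using aeval_self_charpoly (Jmat n 0)

theorem conjTranspose_Jmat_mul_mul_Jmat_sub_self (n : ℕ) (l : ℂ) (S : Matrix (Fin n) (Fin n) ℂ) :
    (Jmat n l)ᴴ * S * Jmat n l - S =
      ((star l • 1 + LinearMap.mulLeft ℂ (Jmat n 0)ᴴ) * (l • 1 + LinearMap.mulRight ℂ (Jmat n 0))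
        - 1) S := by
  rw [Jmat_eq_smul_one_add n l]
  simp only [conjTranspose_add, conjTranspose_smul, conjTranspose_one, LinearMap.sub_apply,
    Module.End.mul_apply, LinearMap.add_apply, LinearMap.smul_apply, Module.End.one_apply,
    LinearMap.mulLeft_apply, LinearMap.mulRight_apply, add_mul, mul_add, smul_mul_assoc,
    mul_smul_comm, one_mul, mul_one, Matrix.mul_assoc, smul_add, smul_smul, mul_comm l (star l)]

theorem eq_zero_of_conjTranspose_Jmat_mul_mul_Jmat_eq {n : ℕ} {l : ℂ} (hl : ‖l‖ ≠ 1)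
    {S : Matrix (Fin n) (Fin n) ℂ} (hS : (Jmat n l)ᴴ * S * Jmat n l = S) : S = 0 := by
  have hl' : star l * l ≠ 1 := by
    rw [Complex.star_def, Complex.conj_mul']
    exact_mod_cast (pow_eq_one_iff_of_nonneg (norm_nonneg l) two_ne_zero).not.2 hl
  have hN := isNilpotent_Jmat_zero n
  have hunit := (LinearMap.commute_mulLeft_right _ _).isUnit_smul_one_add_mul_smul_one_add_sub_one
    ((LinearMap.isNilpotent_mulLeft_iff ℂ (Jmat n 0)ᴴ).2 hN.star)
    ((LinearMap.isNilpotent_mulRight_iff ℂ _).2 hN) hl'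
  refine ((Module.End.isUnit_iff _).1 hunit).injective ?_
  rw [← conjTranspose_Jmat_mul_mul_Jmat_sub_self, hS, sub_self, map_zero]

/-- For `|λ| ≠ 1`, the map `S ↦ S·J_n(λ) + Sᴴ` is surjective: every `A` can be
reduced to `0` by adding `S·J_n(λ) + Sᴴ`. -/
theorem stmt3 (n : ℕ) (l : ℂ) (hl : ‖l‖ ≠ 1)
    (A : Matrix (Fin n) (Fin n) ℂ) :
    ∃ S : Matrix (Fin n) (Fin n) ℂ, A + S * Jmat n l + Sᴴ = 0 := by
  obtain ⟨S, hS⟩ := surjective_mulAddConjTranspose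
    (fun S => eq_zero_of_conjTranspose_Jmat_mul_mul_Jmat_eq hl (S := S)) (-A)
  refine ⟨S, ?_⟩
  rw [add_assoc, add_eq_zero_iff_eq_neg']
  exact hS
end

section
/- Let λ ∈ ℂ with |λ| > 1. Then for every A ∈ ℂ^{2n×2n} there exists exactly one matrix D ∈ ℂ^{2n×2n} whose nonzero entries are confined to the positions (i,1) with n+1 ≤ i ≤ 2n (the first column of the lower-left n×n block) such that A − D ∈ T(H_n(λ)); that is, ℂ^{2n×2n} = T(H_n(λ)) ⊕_ℝ V, where V is the complex subspace of matrices supported on these n positions. -/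
open Matrix

/-!
Write `J = λ + N` with `N` the nilpotent shift and `C = [[P, Q], [R, S]]`; then
`CᴴH + HC = [[R + RᴴJ, Pᴴ + S], [SᴴJ + JP, Qᴴ + JQ]]`.
The diagonal blocks are real-linear in `R` resp. `Q`, with kernels inside the solution sets of the
Stein equations `X = JᴴXJ` resp. `X = JXJᴴ`; as `|λ|² ≠ 1` these are trivial, so both blocks can be
prescribed. Once the upper-right block is fixed, `S` is determined by `P` and the lower-left block
becomes a fixed matrix plus the commutator `[N, P]`. The image of `ad N` is a complement of the
first column: `P = -∑ₜ Nᵗ B (Nᴴ)ᵗ⁺¹` solves `[N, P] = B` off the first column (the sum telescopes),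
and a commutator supported on the first column vanishes, its `(k, 0)` entry being
`tr (Nᵏ [N, P]) = 0`.
-/

open LinearMap in
/-- `x ↦ (α + u) x (β + v)` is `αβ` plus a nilpotent operator, so it has no fixed point but `0`. -/
theorem eq_zero_of_eq_smul_one_add_mul_mul {K A : Type*} [Field K] [Ring A] [Algebra K A]
    {α β : K} {u v x : A} (hu : IsNilpotent u) (hv : IsNilpotent v) (hαβ : α * β ≠ 1)
    (hx : x = (α • 1 + u) * x * (β • 1 + v)) : x = 0 := by
  set S := mulLeft K u
  set T := mulRight K v
  have hST : Commute S T := commute_mulLeft_right u v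
  have hS : IsNilpotent S := (isNilpotent_mulLeft_iff K u).2 hu
  have hT : IsNilpotent T := (isNilpotent_mulRight_iff K v).2 hv
  set N := α • T + β • S + S * T
  have hN : IsNilpotent N := by
    have hlin : Commute (α • T) (β • S) := (hST.symm.smul_left α).smul_right β
    have hquad : Commute (α • T + β • S) (S * T) :=
      ((hST.symm.mul_right (Commute.refl T)).smul_left α).add_left
        (((Commute.refl S).mul_right hST).smul_left β)
    exact hquad.isNilpotent_add (hlin.isNilpotent_add (hT.smul α) (hS.smul β))
      (hST.isNilpotent_mul_right hS)
  have hNx : ((α * β - 1) • (1 : Module.End K A) + N) x = 0 := by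
    have expand : (α • 1 + u) * x * (β • 1 + v) = (α * β) • x + N x := by
      simp only [N, S, T, LinearMap.add_apply, LinearMap.smul_apply, Module.End.mul_apply,
        mulLeft_apply, mulRight_apply, add_mul, mul_add, smul_mul_assoc, mul_smul_comm,
        one_mul, mul_one, mul_assoc]
      module
    rw [LinearMap.add_apply, LinearMap.smul_apply, Module.End.one_apply, sub_smul, one_smul,
      sub_add_eq_add_sub, ← expand, ← hx, sub_self]
  have hunit : IsUnit ((α * β - 1) • (1 : Module.End K A) + N) :=
    hN.isUnit_add_left_of_commute
      ((isUnit_iff_ne_zero.2 (sub_ne_zero.2 hαβ)).map (algebraMap K _))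
      ((Commute.one_right _).smul_right _)
  exact ((Module.End.isUnit_iff _).1 hunit).injective (hNx.trans (map_zero _).symm)

theorem Fin.sum_ite_val_eq {n : ℕ} {M : Type*} [AddCommMonoid M] (v : ℕ) (f : Fin n → M) :
    (∑ k : Fin n, if (k : ℕ) = v then f k else 0) = if h : v < n then f ⟨v, h⟩ else 0 := by
  split_ifs with h
  · rw [Finset.sum_eq_single_of_mem ⟨v, h⟩ (Finset.mem_univ _)
      fun k _ hk => if_neg fun hv => hk (Fin.ext hv)]
    exact if_pos rfl
  · exact Finset.sum_eq_zero fun k _ => if_neg (by omega)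

def shiftMat (R : Type*) [Zero R] [One R] (n : ℕ) : Matrix (Fin n) (Fin n) R :=
  Matrix.of fun i j => if (j : ℕ) = i + 1 then 1 else 0

def SupportedOnFirstColumn {m R : Type*} [Zero R] {n : ℕ} (E : Matrix m (Fin n) R) : Prop :=
  ∀ i (j : Fin n), (j : ℕ) ≠ 0 → E i j = 0

section shift
variable {n : ℕ}

theorem shiftMat_apply (R : Type*) [Zero R] [One R] (i j : Fin n) :
    shiftMat R n i j = if (j : ℕ) = i + 1 then 1 else 0 := rfl

theorem conjTranspose_shiftMat_apply (R : Type*) [Semiring R] [StarRing R] (i j : Fin n) :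
    (shiftMat R n)ᴴ i j = if (i : ℕ) = j + 1 then 1 else 0 := by
  rw [Matrix.conjTranspose_apply, shiftMat_apply]
  split_ifs <;> simp

theorem shiftMat_pow_apply {R : Type*} [Semiring R] (k : ℕ) (i j : Fin n) :
    (shiftMat R n ^ k) i j = if (j : ℕ) = i + k then 1 else 0 := by
  induction k generalizing j with
  | zero => simp [Matrix.one_apply, Fin.ext_iff, eq_comm]
  | succ k ih =>
    simp only [pow_succ, Matrix.mul_apply, ih, shiftMat_apply, ite_mul, one_mul, zero_mul]
    rw [Fin.sum_ite_val_eq]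
    split_ifs <;> simp_all <;> omega

theorem shiftMat_pow_self (R : Type*) [Semiring R] : shiftMat R n ^ n = 0 := by
  ext i j
  rw [shiftMat_pow_apply, if_neg (by omega), Matrix.zero_apply]

theorem isNilpotent_shiftMat (R : Type*) [Semiring R] : IsNilpotent (shiftMat R n) :=
  ⟨n, shiftMat_pow_self R⟩

theorem isNilpotent_conjTranspose_shiftMat (R : Type*) [Semiring R] [StarRing R] :
    IsNilpotent (shiftMat R n)ᴴ :=
  ⟨n, by rw [← Matrix.conjTranspose_pow, shiftMat_pow_self, Matrix.conjTranspose_zero]⟩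

theorem conjTranspose_shiftMat_mul_shiftMat (R : Type*) [Semiring R] [StarRing R] :
    (shiftMat R n)ᴴ * shiftMat R n =
      Matrix.diagonal fun j : Fin n => if (j : ℕ) = 0 then 0 else 1 := by
  ext i j
  simp only [Matrix.mul_apply, conjTranspose_shiftMat_apply, shiftMat_apply, ite_mul, one_mul,
    zero_mul, Matrix.diagonal_apply, Fin.ext_iff]
  by_cases hi : (i : ℕ) = 0
  · rw [Finset.sum_eq_zero fun k _ => if_neg (by omega), if_pos hi, ite_self]
  · rw [Finset.sum_eq_single_of_mem ⟨i - 1, by omega⟩ (Finset.mem_univ _)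
      fun k _ hk => if_neg fun h => hk (Fin.ext (by simp only; omega))]
    simp only [if_neg hi]
    split_ifs <;> first | rfl | omega

theorem trace_shiftMat_pow_mul {R : Type*} [Semiring R] (k : ℕ) (E : Matrix (Fin n) (Fin n) R) :
    (shiftMat R n ^ k * E).trace =
      ∑ i : Fin n, if h : (i : ℕ) + k < n then E ⟨i + k, h⟩ i else 0 := by
  simp only [Matrix.trace, Matrix.diag, Matrix.mul_apply, shiftMat_pow_apply, ite_mul, one_mul,
    zero_mul, Fin.sum_ite_val_eq]

theorem exists_supportedOnFirstColumn_sub_commutator_shiftMat {R : Type*} [Ring R] [StarRing R]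
    (B : Matrix (Fin n) (Fin n) R) :
    ∃ P, SupportedOnFirstColumn (B - (shiftMat R n * P - P * shiftMat R n)) := by
  set N := shiftMat R n
  set f : ℕ → Matrix (Fin n) (Fin n) R := fun t => N ^ t * B * Nᴴ ^ t
  have hleft : ∀ t, N * (N ^ t * B * Nᴴ ^ (t + 1)) = f (t + 1) := fun t => by
    simp only [f, ← Matrix.mul_assoc, ← pow_succ']
  have hright : ∀ t, N ^ t * B * Nᴴ ^ (t + 1) * N = f t * (Nᴴ * N) := fun t => by
    simp only [f, pow_succ, Matrix.mul_assoc]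
  set P := -∑ t ∈ Finset.range n, N ^ t * B * Nᴴ ^ (t + 1)
  refine ⟨P, fun i j hj => ?_⟩
  have hproj : ∀ M : Matrix (Fin n) (Fin n) R, (M * (Nᴴ * N)) i j = M i j := fun M => by
    rw [conjTranspose_shiftMat_mul_shiftMat, Matrix.mul_diagonal, if_neg hj, mul_one]
  have htelescope : (N * P - P * N) i j = ∑ t ∈ Finset.range n, (f t i j - f (t + 1) i j) := by
    simp only [P, Matrix.mul_neg, Matrix.neg_mul, Matrix.mul_sum, Matrix.sum_mul, hleft, hright,
      Matrix.sub_apply, Matrix.neg_apply, Matrix.sum_apply, hproj, Finset.sum_sub_distrib]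
    abel
  rw [Matrix.sub_apply, htelescope, Finset.sum_range_sub']
  simp only [f, N, shiftMat_pow_self, pow_zero, Matrix.one_mul, Matrix.mul_one, Matrix.zero_mul,
    Matrix.zero_apply, sub_zero, sub_self]

theorem eq_zero_of_commutator_shiftMat_eq {R : Type*} [CommRing R]
    {P E : Matrix (Fin n) (Fin n) R} (hE : SupportedOnFirstColumn E)
    (h : shiftMat R n * P - P * shiftMat R n = E) : E = 0 := by
  set N := shiftMat R n
  have htrace : ∀ k, (N ^ k * E).trace = 0 := fun k => by
    rw [← h, Matrix.mul_sub, Matrix.trace_sub, ← Matrix.mul_assoc, ← pow_succ, ← Matrix.mul_assoc,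
      Matrix.trace_mul_comm _ N, ← Matrix.mul_assoc, ← pow_succ', sub_self]
  ext a j
  by_cases hj : (j : ℕ) = 0
  · rw [Matrix.zero_apply, ← htrace a, trace_shiftMat_pow_mul, Finset.sum_eq_single_of_mem j
      (Finset.mem_univ _) fun i _ hi => ?_, dif_pos (by omega)]
    · congr 1
      ext
      simp only [hj, zero_add]
    · split_ifs
      · exact hE _ _ fun hi0 => hi (Fin.ext (hi0.trans hj.symm))
      · rfl
  · exact hE a j hj

end shift

section jordan
variable {n : ℕ} {l : ℂ}

theorem Jmat_eq_smul_one_add_shiftMat : Jmat n l = l • 1 + shiftMat ℂ n := by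
  ext i j
  simp only [Jmat, shiftMat, Matrix.of_apply, Matrix.add_apply, Matrix.smul_apply,
    Matrix.one_apply, Fin.ext_iff]
  split_ifs <;> first | (exfalso; omega) | simp

theorem conjTranspose_Jmat : (Jmat n l)ᴴ = star l • 1 + (shiftMat ℂ n)ᴴ := by
  rw [Jmat_eq_smul_one_add_shiftMat, Matrix.conjTranspose_add, Matrix.conjTranspose_smul,
    Matrix.conjTranspose_one]

theorem Jmat_commutator (P : Matrix (Fin n) (Fin n) ℂ) :
    Jmat n l * P - P * Jmat n l = shiftMat ℂ n * P - P * shiftMat ℂ n := by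
  rw [Jmat_eq_smul_one_add_shiftMat, Matrix.add_mul, Matrix.mul_add, Matrix.smul_mul,
    Matrix.mul_smul, Matrix.one_mul, Matrix.mul_one]
  abel

theorem Complex.star_mul_self_ne_one (hl : ‖l‖ ≠ 1) : star l * l ≠ 1 := by
  rw [Complex.star_def, Complex.conj_mul']
  exact_mod_cast (pow_eq_one_iff_of_nonneg (norm_nonneg l) two_ne_zero).not.2 hl

theorem eq_zero_of_eq_conjTranspose_Jmat_mul_mul (hl : ‖l‖ ≠ 1) {X : Matrix (Fin n) (Fin n) ℂ}
    (hX : X = (Jmat n l)ᴴ * X * Jmat n l) : X = 0 := by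
  rw [conjTranspose_Jmat, Jmat_eq_smul_one_add_shiftMat] at hX
  exact eq_zero_of_eq_smul_one_add_mul_mul (isNilpotent_conjTranspose_shiftMat ℂ)
    (isNilpotent_shiftMat ℂ) (Complex.star_mul_self_ne_one hl) hX

theorem eq_zero_of_eq_Jmat_mul_mul_conjTranspose (hl : ‖l‖ ≠ 1) {X : Matrix (Fin n) (Fin n) ℂ}
    (hX : X = Jmat n l * X * (Jmat n l)ᴴ) : X = 0 := by
  rw [conjTranspose_Jmat, Jmat_eq_smul_one_add_shiftMat] at hX
  exact eq_zero_of_eq_smul_one_add_mul_mul (isNilpotent_shiftMat ℂ)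
    (isNilpotent_conjTranspose_shiftMat ℂ) (mul_comm l _ ▸ Complex.star_mul_self_ne_one hl) hX

end jordan

section congruence
variable {m : Type*} [Fintype m]

theorem exists_add_conjTranspose_mul_eq {M : Matrix m m ℂ}
    (hM : ∀ X : Matrix m m ℂ, X = Mᴴ * X * M → X = 0) (Y : Matrix m m ℂ) :
    ∃ X : Matrix m m ℂ, X + Xᴴ * M = Y := by
  let f : Matrix m m ℂ →ₗ[ℝ] Matrix m m ℂ :=
    { toFun := fun X => X + Xᴴ * M
      map_add' := fun X Y => by
        simp only [Matrix.conjTranspose_add, Matrix.add_mul]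
        abel
      map_smul' := fun r X => by
        simp only [Matrix.conjTranspose_smul, Matrix.smul_mul, star_trivial, RingHom.id_apply,
          smul_add] }
  have hinj : Function.Injective f := by
    refine (injective_iff_map_eq_zero f).2 fun X hX => hM X ?_
    have hX' : X = -(Xᴴ * M) := eq_neg_of_add_eq_zero_left hX
    have hXh : Xᴴ = -(Mᴴ * X) := by
      conv_lhs => rw [hX']
      rw [Matrix.conjTranspose_neg, Matrix.conjTranspose_mul, Matrix.conjTranspose_conjTranspose]
    calc X = -(Xᴴ * M) := hX'
      _ = Mᴴ * X * M := by rw [hXh, Matrix.neg_mul, neg_neg]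
  exact LinearMap.injective_iff_surjective.1 hinj Y

theorem exists_conjTranspose_add_mul_eq {M : Matrix m m ℂ}
    (hM : ∀ X : Matrix m m ℂ, X = M * X * Mᴴ → X = 0) (Y : Matrix m m ℂ) :
    ∃ X : Matrix m m ℂ, Xᴴ + M * X = Y := by
  obtain ⟨X, hX⟩ := exists_add_conjTranspose_mul_eq (M := Mᴴ)
    (by simpa only [Matrix.conjTranspose_conjTranspose] using hM) Yᴴ
  refine ⟨X, ?_⟩
  rw [← Matrix.conjTranspose_conjTranspose Y, ← hX, Matrix.conjTranspose_add,
    Matrix.conjTranspose_mul, Matrix.conjTranspose_conjTranspose,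
    Matrix.conjTranspose_conjTranspose]

theorem sub_mem_Tset {M X Y : Matrix m m ℂ} (hX : X ∈ Tset M) (hY : Y ∈ Tset M) :
    X - Y ∈ Tset M := by
  obtain ⟨C, rfl⟩ := hX
  obtain ⟨C', rfl⟩ := hY
  refine ⟨C - C', ?_⟩
  rw [Matrix.conjTranspose_sub, Matrix.sub_mul, Matrix.mul_sub]
  abel

end congruence

section blocks
variable {n : ℕ} {l : ℂ}

theorem conjTranspose_mul_Hmat_add_Hmat_mul (P Q R S : Matrix (Fin n) (Fin n) ℂ) :
    (Matrix.fromBlocks P Q R S)ᴴ * Hmat n l + Hmat n l * Matrix.fromBlocks P Q R S =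
      Matrix.fromBlocks (R + Rᴴ * Jmat n l) (Pᴴ + S) (Sᴴ * Jmat n l + Jmat n l * P)
        (Qᴴ + Jmat n l * Q) := by
  simp only [Hmat, Matrix.fromBlocks_conjTranspose, Matrix.fromBlocks_multiply,
    Matrix.fromBlocks_add, Matrix.mul_zero, Matrix.zero_mul, Matrix.mul_one, Matrix.one_mul,
    add_zero, zero_add, add_comm (Rᴴ * Jmat n l)]

theorem mem_Tset_Hmat_iff {X : Matrix (Fin n ⊕ Fin n) (Fin n ⊕ Fin n) ℂ} :
    X ∈ Tset (Hmat n l) ↔ ∃ P Q R S : Matrix (Fin n) (Fin n) ℂ,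
      X = Matrix.fromBlocks (R + Rᴴ * Jmat n l) (Pᴴ + S) (Sᴴ * Jmat n l + Jmat n l * P)
        (Qᴴ + Jmat n l * Q) := by
  constructor
  · rintro ⟨C, rfl⟩
    refine ⟨C.toBlocks₁₁, C.toBlocks₁₂, C.toBlocks₂₁, C.toBlocks₂₂, ?_⟩
    rw [← conjTranspose_mul_Hmat_add_Hmat_mul, Matrix.fromBlocks_toBlocks]
  · rintro ⟨P, Q, R, S, rfl⟩
    exact ⟨Matrix.fromBlocks P Q R S, (conjTranspose_mul_Hmat_add_Hmat_mul P Q R S).symm⟩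

theorem lowerLeftFirstColumn_support_iff {R : Type*} [Zero R]
    (D : Matrix (Fin n ⊕ Fin n) (Fin n ⊕ Fin n) R) :
    (∀ p q, D p q ≠ 0 →
        (∃ i : Fin n, p = Sum.inr i) ∧ ∃ j : Fin n, q = Sum.inl j ∧ (j : ℕ) = 0) ↔
      ∃ E : Matrix (Fin n) (Fin n) R, SupportedOnFirstColumn E ∧ D = Matrix.fromBlocks 0 0 E 0 := by
  constructor
  · intro hD
    refine ⟨D.toBlocks₂₁, fun i j hj => ?_, ?_⟩
    · by_contra h
      obtain ⟨-, j', hj', hj'0⟩ := hD _ _ h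
      exact hj (Sum.inl_injective hj' ▸ hj'0)
    · ext (i | i) (j | j)
      all_goals
        first
        | rfl
        | exact by_contra fun h => by
            obtain ⟨⟨_, hi⟩, _, hj, -⟩ := hD _ _ h
            cases hi <;> cases hj
  · rintro ⟨E, hE, rfl⟩ (i | i) (j | j) h
    · exact absurd rfl h
    · exact absurd rfl h
    · exact ⟨⟨i, rfl⟩, j, rfl, by_contra fun hj => h (hE i j hj)⟩
    · exact absurd rfl h

theorem exists_sub_fromBlocks_mem_Tset_Hmat (hl : ‖l‖ ≠ 1)
    (A : Matrix (Fin n ⊕ Fin n) (Fin n ⊕ Fin n) ℂ) :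
    ∃ E : Matrix (Fin n) (Fin n) ℂ, SupportedOnFirstColumn E ∧
      A - Matrix.fromBlocks 0 0 E 0 ∈ Tset (Hmat n l) := by
  obtain ⟨R, hR⟩ := exists_add_conjTranspose_mul_eq
    (fun _ => eq_zero_of_eq_conjTranspose_Jmat_mul_mul hl) A.toBlocks₁₁
  obtain ⟨Q, hQ⟩ := exists_conjTranspose_add_mul_eq
    (fun _ => eq_zero_of_eq_Jmat_mul_mul_conjTranspose hl) A.toBlocks₂₂
  set B := A.toBlocks₂₁ - A.toBlocks₁₂ᴴ * Jmat n l
  obtain ⟨P, hP⟩ := exists_supportedOnFirstColumn_sub_commutator_shiftMat B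
  refine ⟨_, hP, mem_Tset_Hmat_iff.2 ⟨P, Q, R, A.toBlocks₁₂ - Pᴴ, ?_⟩⟩
  conv_lhs => rw [← Matrix.fromBlocks_toBlocks A]
  rw [sub_eq_add_neg, Matrix.fromBlocks_neg, Matrix.fromBlocks_add, Matrix.fromBlocks_inj,
    ← Jmat_commutator, hR, hQ]
  refine ⟨by simp, by simp, ?_, by simp⟩
  simp only [B, Matrix.conjTranspose_sub, Matrix.conjTranspose_conjTranspose, Matrix.sub_mul]
  abel

theorem eq_zero_of_fromBlocks_mem_Tset_Hmat {E : Matrix (Fin n) (Fin n) ℂ}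
    (hE : SupportedOnFirstColumn E) (h : Matrix.fromBlocks 0 0 E 0 ∈ Tset (Hmat n l)) :
    E = 0 := by
  obtain ⟨P, Q, R, S, h⟩ := mem_Tset_Hmat_iff.1 h
  obtain ⟨-, h12, h21, -⟩ := Matrix.fromBlocks_inj.1 h
  refine eq_zero_of_commutator_shiftMat_eq hE (P := P) ?_
  rw [← Jmat_commutator (l := l), h21, eq_neg_of_add_eq_zero_right h12.symm,
    Matrix.conjTranspose_neg, Matrix.conjTranspose_conjTranspose, Matrix.neg_mul]
  abel

end blocks

/-- For `|λ| > 1`: `ℂ^{2n×2n} = T(H_n(λ)) ⊕_ℝ V`, where `V` consists of matrices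
supported on the first column of the lower-left `n×n` block (positions `(i,1)`,
`n+1 ≤ i ≤ 2n`). -/
theorem stmt6 (n : ℕ) (l : ℂ) (hl : 1 < ‖l‖)
    (A : Matrix (Fin n ⊕ Fin n) (Fin n ⊕ Fin n) ℂ) :
    ∃! D : Matrix (Fin n ⊕ Fin n) (Fin n ⊕ Fin n) ℂ,
      (∀ p q, D p q ≠ 0 →
        (∃ i : Fin n, p = Sum.inr i) ∧ ∃ j : Fin n, q = Sum.inl j ∧ (j : ℕ) = 0) ∧
      A - D ∈ Tset (Hmat n l) := by
  obtain ⟨E, hE, hmem⟩ := exists_sub_fromBlocks_mem_Tset_Hmat hl.ne' A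
  refine ⟨Matrix.fromBlocks 0 0 E 0,
    ⟨(lowerLeftFirstColumn_support_iff _).2 ⟨E, hE, rfl⟩, hmem⟩, ?_⟩
  rintro D ⟨hD, hDmem⟩
  obtain ⟨E', hE', rfl⟩ := (lowerLeftFirstColumn_support_iff D).1 hD
  have hdiff : Matrix.fromBlocks 0 0 (E' - E) 0 ∈ Tset (Hmat n l) := by
    convert sub_mem_Tset hmem hDmem using 1
    rw [sub_sub_sub_cancel_left, sub_eq_add_neg, sub_eq_add_neg, Matrix.fromBlocks_neg,
      Matrix.fromBlocks_add]
    simp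
  have hzero := eq_zero_of_fromBlocks_mem_Tset_Hmat
    (fun i j hj => by rw [Matrix.sub_apply, hE' i j hj, hE i j hj, sub_self]) hdiff
  rw [sub_eq_zero.1 hzero]
end
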